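/- Kierstead path lemma, parts (1) and (2): Let G be a simple graph with maximum degree Δ and χ'(G) = Δ + 1, let e₁ = y₀y₁ be a critical edge, φ ∈ C^Δ(G - e₁), and let K = (y₀, e₁, y₁, e₂, y₂, e₃, y₃) be a Kierstead path with respect to e₁ and φ. Then φ̄(y₀) ∩ φ̄(y₁) = ∅, and if d(y₂) < Δ then V(K) is elementary with respect to φ. -/

import Mathlib

open Finset
open scoped Classical

variable {V : Type*}

/-- `φ` is a proper edge coloring of `G` using colors `{1,…,k}`. -/
def IsProperEdgeColoring (G : SimpleGraph V) (k : ℕ) (φ : Sym2 V → ℕ) : Prop :=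
  (∀ e ∈ G.edgeSet, φ e ∈ Finset.Icc 1 k) ∧
  ∀ e ∈ G.edgeSet, ∀ f ∈ G.edgeSet, e ≠ f → (∃ v, v ∈ e ∧ v ∈ f) → φ e ≠ φ f

/-- The set of colors of `{1,…,k}` missing at `v` under `φ`. -/
noncomputable def missing (G : SimpleGraph V) (k : ℕ) (φ : Sym2 V → ℕ) (v : V) : Finset ℕ :=
  (Finset.Icc 1 k).filter (fun c => ∀ u, G.Adj v u → φ s(v, u) ≠ c)

/-- `G` is edge-`Δ`-critical: max degree `Δ`, `χ' = Δ+1`, and every proper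
subgraph is edge-`Δ`-colorable. -/
def EdgeCritical (G : SimpleGraph V) [Fintype V] (Δ : ℕ) : Prop :=
  G.maxDegree = Δ ∧
  ¬ (∃ φ, IsProperEdgeColoring G Δ φ) ∧
  (∃ φ, IsProperEdgeColoring G (Δ + 1) φ) ∧
  ∀ H : SimpleGraph V, H < G → ∃ φ, IsProperEdgeColoring H Δ φ

/-- Missing colors in `G - y₀y₁`. -/
noncomputable def m5 (G : SimpleGraph V) (Δ : ℕ) (φ : Sym2 V → ℕ) (y0 y1 v : V) : Finset ℕ :=
  missing (G.deleteEdges {s(y0, y1)}) Δ φ v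

/-!
A colour missing at both `y₀` and `y₁` would extend `φ` to a `Δ`-edge-colouring of `G`. Every
other pair of vertices is reduced to a pair handled before it by changing the colouring while
keeping the Kierstead conditions: either recolour `e₂` or `e₃` with a colour missing at both of its
ends, or interchange two colours `a, b` on one component of the `(a, b)`-Kempe graph. That graph
has maximum degree two and a vertex missing `a` or `b` has degree at most one there, so of three
such vertices at most two share a component, and a swap at the third one moves a missing colour
without disturbing the other two. The degree bounds at `y₁` and `y₂` provide the second colour of
the Kempe chains.
-/

open Function (update update_of_ne update_self)

theorem Equiv.swap_apply_mem_iff {α : Type*} [DecidableEq α] {s : Finset α} {a b c : α}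
    (ha : a ∈ s) (hb : b ∈ s) : Equiv.swap a b c ∈ s ↔ c ∈ s := by
  rw [Equiv.swap_apply_def]
  split_ifs <;> simp_all

theorem inter_eq_empty_of_disjoint₄ {ι α : Type*} [DecidableEq ι] [DecidableEq α]
    {f : ι → Finset α} {a b c d : ι}
    (hab : Disjoint (f a) (f b)) (hac : Disjoint (f a) (f c)) (had : Disjoint (f a) (f d))
    (hbc : Disjoint (f b) (f c)) (hbd : Disjoint (f b) (f d)) (hcd : Disjoint (f c) (f d)) :
    ∀ u ∈ ({a, b, c, d} : Finset ι), ∀ v ∈ ({a, b, c, d} : Finset ι), u ≠ v →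
      f u ∩ f v = ∅ := by
  simp only [mem_insert, mem_singleton, ← disjoint_iff_inter_eq_empty]
  rintro u (rfl | rfl | rfl | rfl) v (rfl | rfl | rfl | rfl) huv <;>
    first | exact absurd rfl huv | assumption | exact Disjoint.symm ‹_›

namespace SimpleGraph

variable {K : SimpleGraph V} {x y z m u : V}

theorem degree_deleteEdges_lt {G : SimpleGraph V}
    [Fintype (G.neighborSet y)] [Fintype ((G.deleteEdges {s(x, y)}).neighborSet y)]
    (h : G.Adj x y) : (G.deleteEdges {s(x, y)}).degree y < G.degree y := by
  simp only [← card_neighborFinset_eq_degree]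
  refine card_lt_card ((ssubset_iff_of_subset fun u hu => ?_).2 ⟨x, ?_, ?_⟩)
  · simp only [mem_neighborFinset] at hu ⊢; exact hu.1
  · simpa using h.symm
  · simp

theorem Walk.IsPath.exists_adj_adj_of_mem_support {p : K.Walk y z} (hp : p.IsPath)
    (hm : m ∈ p.support) (hmy : m ≠ y) (hmz : m ≠ z) :
    ∃ u₁ ∈ p.support, ∃ u₂ ∈ p.support, u₁ ≠ u₂ ∧ K.Adj m u₁ ∧ K.Adj m u₂ := by
  obtain ⟨i, rfl, hi⟩ := Walk.mem_support_iff_exists_getVert.1 hm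
  have hi₀ : i ≠ 0 := by rintro rfl; exact hmy p.getVert_zero
  have hil : i ≠ p.length := by rintro rfl; exact hmz p.getVert_length
  have hprev := p.adj_getVert_succ (i := i - 1) (by omega)
  rw [Nat.sub_add_cancel (by omega)] at hprev
  refine ⟨_, p.getVert_mem_support (i - 1), _, p.getVert_mem_support (i + 1), fun h => ?_,
    hprev.symm, p.adj_getVert_succ (by omega)⟩
  have := hp.getVert_injOn (by simp; omega) (by simp; omega) h
  omega

theorem Walk.exists_adj_mem_support_of_ne (p : K.Walk y z) (hyz : y ≠ z) :
    ∃ u ∈ p.support, K.Adj y u :=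
  ⟨p.snd, p.getVert_mem_support 1, p.adj_snd (Walk.not_nil_of_ne hyz)⟩

theorem Walk.IsPath.mem_support_of_adj
    (hK : ∀ ⦃v u₁ u₂ u₃⦄, K.Adj v u₁ → K.Adj v u₂ → K.Adj v u₃ → u₁ = u₂ ∨ u₁ = u₃ ∨ u₂ = u₃)
    (hy : (K.neighborSet y).Subsingleton) (hz : (K.neighborSet z).Subsingleton)
    {p : K.Walk y z} (hp : p.IsPath) (hyz : y ≠ z) (hm : m ∈ p.support) (hmu : K.Adj m u) :
    u ∈ p.support := by
  by_cases hmy : m = y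
  · subst hmy
    obtain ⟨n, hn, hadj⟩ := p.exists_adj_mem_support_of_ne hyz
    exact hy hmu hadj ▸ hn
  by_cases hmz : m = z
  · subst hmz
    obtain ⟨n, hn, hadj⟩ := p.reverse.exists_adj_mem_support_of_ne hyz.symm
    rw [Walk.support_reverse, List.mem_reverse] at hn
    exact hz hmu hadj ▸ hn
  obtain ⟨u₁, h₁, u₂, h₂, hne, a₁, a₂⟩ := hp.exists_adj_adj_of_mem_support hm hmy hmz
  rcases hK hmu a₁ a₂ with rfl | rfl | h
  exacts [h₁, h₂, (hne h).elim]

/-- In a graph of maximum degree two, a component contains at most two vertices of degree at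
most one: the vertex set of a path between two of them is closed under adjacency, so it would
contain the third one as an interior vertex. -/
theorem not_reachable_of_subsingleton_neighborSet
    (hK : ∀ ⦃v u₁ u₂ u₃⦄, K.Adj v u₁ → K.Adj v u₂ → K.Adj v u₃ → u₁ = u₂ ∨ u₁ = u₃ ∨ u₂ = u₃)
    (hx : (K.neighborSet x).Subsingleton) (hy : (K.neighborSet y).Subsingleton)
    (hz : (K.neighborSet z).Subsingleton) (hxy : x ≠ y) (hxz : x ≠ z) (hyz : y ≠ z)
    (h : K.Reachable x y) : ¬ K.Reachable x z := by
  intro h'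
  obtain ⟨q⟩ := h.symm.trans h'
  obtain ⟨p, hp⟩ := q.toPath
  have hxp : x ∈ p.support := by
    by_contra hxp
    obtain ⟨r⟩ := h.symm
    obtain ⟨d, -, hd₁, hd₂⟩ := r.exists_boundary_dart {v | v ∈ p.support} p.start_mem_support hxp
    exact hd₂ (hp.mem_support_of_adj hK hy hz hyz hd₁ d.adj)
  obtain ⟨u₁, -, u₂, -, hne, a₁, a₂⟩ := hp.exists_adj_adj_of_mem_support hxp hxy hxz
  exact hne (hx a₁ a₂)

end SimpleGraph

section EdgeColoring

variable {H H' : SimpleGraph V} {k : ℕ} {ψ : Sym2 V → ℕ} {u v x y : V} {a c : ℕ}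

theorem mem_missing : c ∈ missing H k ψ v ↔ c ∈ Icc 1 k ∧ ∀ u, H.Adj v u → ψ s(v, u) ≠ c := by
  simp [missing]

theorem mem_Icc_of_mem_missing (hc : c ∈ missing H k ψ v) : c ∈ Icc 1 k :=
  (mem_missing.1 hc).1

theorem ne_of_mem_missing_left (hc : c ∈ missing H k ψ v) (h : H.Adj v u) : ψ s(v, u) ≠ c :=
  (mem_missing.1 hc).2 u h

theorem ne_of_mem_missing_right (hc : c ∈ missing H k ψ v) (h : H.Adj u v) : ψ s(u, v) ≠ c := by
  rw [Sym2.eq_swap]; exact ne_of_mem_missing_left hc h.symm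

theorem notMem_missing_of_adj (h : H.Adj v u) : ψ s(v, u) ∉ missing H k ψ v :=
  fun hc => ne_of_mem_missing_left hc h rfl

theorem missing_subset_of_le (hle : H' ≤ H) : missing H k ψ v ⊆ missing H' k ψ v := fun _ hc =>
  mem_missing.2 ⟨mem_Icc_of_mem_missing hc, fun _ hu => ne_of_mem_missing_left hc (hle hu)⟩

theorem missing_nonempty_of_degree_lt [Fintype (H.neighborSet v)] (h : H.degree v < k) :
    (missing H k ψ v).Nonempty := by
  by_contra hem
  have hsub : Icc 1 k ⊆ (H.neighborFinset v).image (fun u => ψ s(v, u)) := by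
    intro c hc
    have hc' : c ∉ missing H k ψ v := fun h => hem ⟨c, h⟩
    simp only [mem_missing, hc, true_and, not_forall, not_not] at hc'
    obtain ⟨u, hu, rfl⟩ := hc'
    exact mem_image_of_mem _ ((H.mem_neighborFinset v u).2 hu)
  have := (card_le_card hsub).trans card_image_le
  rw [Nat.card_Icc, SimpleGraph.card_neighborFinset_eq_degree] at this
  omega

theorem isProperEdgeColoring_iff : IsProperEdgeColoring H k ψ ↔
    (∀ ⦃u v⦄, H.Adj u v → ψ s(u, v) ∈ Icc 1 k) ∧
      ∀ ⦃v u₁ u₂⦄, H.Adj v u₁ → H.Adj v u₂ → u₁ ≠ u₂ → ψ s(v, u₁) ≠ ψ s(v, u₂) := by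
  refine ⟨fun ⟨hI, hP⟩ => ⟨fun u v h => hI _ h, fun v u₁ u₂ h₁ h₂ hne => ?_⟩,
    fun ⟨hI, hP⟩ => ⟨fun e he => ?_, fun e he f hf hne ⟨v, hve, hvf⟩ => ?_⟩⟩
  · exact hP _ h₁ _ h₂ (fun h => hne (Sym2.congr_right.1 h)) ⟨v, Sym2.mem_mk_left _ _,
      Sym2.mem_mk_left _ _⟩
  · exact Sym2.ind (fun _ _ h => hI h) e he
  · obtain ⟨u₁, rfl⟩ := Sym2.mem_iff_exists.1 hve
    obtain ⟨u₂, rfl⟩ := Sym2.mem_iff_exists.1 hvf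
    exact hP he hf fun h => hne (h ▸ rfl)

namespace IsProperEdgeColoring

theorem mem_Icc (hψ : IsProperEdgeColoring H k ψ) (h : H.Adj u v) : ψ s(u, v) ∈ Icc 1 k :=
  (isProperEdgeColoring_iff.1 hψ).1 h

theorem ne {u₁ u₂ : V} (hψ : IsProperEdgeColoring H k ψ) (h₁ : H.Adj v u₁) (h₂ : H.Adj v u₂)
    (hne : u₁ ≠ u₂) : ψ s(v, u₁) ≠ ψ s(v, u₂) :=
  (isProperEdgeColoring_iff.1 hψ).2 h₁ h₂ hne

theorem anti (hψ : IsProperEdgeColoring H k ψ) (hle : H' ≤ H) : IsProperEdgeColoring H' k ψ :=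
  isProperEdgeColoring_iff.2 ⟨fun _ _ h => hψ.mem_Icc (hle h),
    fun _ _ _ h₁ h₂ hne => hψ.ne (hle h₁) (hle h₂) hne⟩

theorem update_of_deleteEdges (hψ : IsProperEdgeColoring (H.deleteEdges {s(x, y)}) k ψ)
    (hx : c ∈ missing (H.deleteEdges {s(x, y)}) k ψ x)
    (hy : c ∈ missing (H.deleteEdges {s(x, y)}) k ψ y) :
    IsProperEdgeColoring H k (update ψ s(x, y) c) := by
  have hadj : ∀ {u v}, H.Adj u v → s(u, v) ≠ s(x, y) → (H.deleteEdges {s(x, y)}).Adj u v :=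
    fun h hne => by simp [h, hne]
  have hfree : ∀ {v u}, v ∈ s(x, y) → H.Adj v u → s(v, u) ≠ s(x, y) →
      update ψ s(x, y) c s(v, u) ≠ c := by
    intro v u hv hu hne
    rw [update_of_ne hne]
    rcases Sym2.mem_iff.1 hv with rfl | rfl
    exacts [ne_of_mem_missing_left hx (hadj hu hne), ne_of_mem_missing_left hy (hadj hu hne)]
  refine isProperEdgeColoring_iff.2 ⟨fun u v h => ?_, fun v u₁ u₂ h₁ h₂ hne => ?_⟩
  · by_cases he : s(u, v) = s(x, y)
    · rw [he, update_self]; exact mem_Icc_of_mem_missing hx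
    · rw [update_of_ne he]; exact hψ.mem_Icc (hadj h he)
  · by_cases he₁ : s(v, u₁) = s(x, y) <;> by_cases he₂ : s(v, u₂) = s(x, y)
    · exact absurd (Sym2.congr_right.1 (he₁.trans he₂.symm)) hne
    · rw [he₁, update_self]; exact (hfree (he₁ ▸ Sym2.mem_mk_left v u₁) h₂ he₂).symm
    · rw [he₂, update_self]; exact hfree (he₂ ▸ Sym2.mem_mk_left v u₂) h₁ he₁
    · rw [update_of_ne he₁, update_of_ne he₂]; exact hψ.ne (hadj h₁ he₁) (hadj h₂ he₂) hne

theorem update (hψ : IsProperEdgeColoring H k ψ) (hx : c ∈ missing H k ψ x)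
    (hy : c ∈ missing H k ψ y) : IsProperEdgeColoring H k (Function.update ψ s(x, y) c) :=
  (hψ.anti (H.deleteEdges_le _)).update_of_deleteEdges
    (missing_subset_of_le (H.deleteEdges_le _) hx) (missing_subset_of_le (H.deleteEdges_le _) hy)

theorem mem_missing_update_self (hψ : IsProperEdgeColoring H k ψ) (hxy : H.Adj x y)
    (hc : c ∈ missing H k ψ x) : ψ s(x, y) ∈ missing H k (Function.update ψ s(x, y) c) x := by
  refine mem_missing.2 ⟨hψ.mem_Icc hxy, fun u hu => ?_⟩
  by_cases he : s(x, u) = s(x, y)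
  · rw [he, update_self]; exact (ne_of_mem_missing_left hc hxy).symm
  · rw [update_of_ne he]; exact hψ.ne hu hxy fun h => he (h ▸ rfl)

end IsProperEdgeColoring

theorem mem_missing_update_of_notMem (hv : v ∉ s(x, y)) :
    a ∈ missing H k (update ψ s(x, y) c) v ↔ a ∈ missing H k ψ v := by
  have hval : ∀ u, update ψ s(x, y) c s(v, u) = ψ s(v, u) := fun u =>
    update_of_ne (fun (h : s(v, u) = s(x, y)) => hv (h ▸ Sym2.mem_mk_left v u)) _ _
  simp only [mem_missing, hval]

theorem disjoint_missing_of_not_colorable (hG : ¬ ∃ φ, IsProperEdgeColoring H k φ)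
    (hψ : IsProperEdgeColoring (H.deleteEdges {s(x, y)}) k ψ) :
    Disjoint (missing (H.deleteEdges {s(x, y)}) k ψ x) (missing (H.deleteEdges {s(x, y)}) k ψ y) :=
  disjoint_left.2 fun _ hx hy => hG ⟨_, hψ.update_of_deleteEdges hx hy⟩

end EdgeColoring

section Kempe

variable {H : SimpleGraph V} {k : ℕ} {ψ : Sym2 V → ℕ} {a b c : ℕ} {u v w x y z : V}

def kempeGraph (H : SimpleGraph V) (ψ : Sym2 V → ℕ) (a b : ℕ) : SimpleGraph V where
  Adj u v := H.Adj u v ∧ (ψ s(u, v) = a ∨ ψ s(u, v) = b)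
  symm := ⟨fun u _ h => ⟨h.1.symm, Sym2.eq_swap (a := u) ▸ h.2⟩⟩
  loopless := ⟨fun v h => H.loopless.irrefl v h.1⟩

noncomputable def kempeSwap (H : SimpleGraph V) (ψ : Sym2 V → ℕ) (a b : ℕ) (w : V) :
    Sym2 V → ℕ := fun e =>
  if e ∈ (kempeGraph H ψ a b).edgeSet ∧ ∀ v ∈ e, (kempeGraph H ψ a b).Reachable w v then
    Equiv.swap a b (ψ e)
  else ψ e

theorem kempeSwap_eq_iff_of_ne {e : Sym2 V} (ha : c ≠ a) (hb : c ≠ b) :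
    kempeSwap H ψ a b w e = c ↔ ψ e = c := by
  unfold kempeSwap
  split_ifs
  · rw [Equiv.swap_apply_eq_iff, Equiv.swap_apply_of_ne_of_ne ha hb]
  · rfl

theorem kempeSwap_of_ne {e : Sym2 V} (ha : ψ e ≠ a) (hb : ψ e ≠ b) :
    kempeSwap H ψ a b w e = ψ e :=
  (kempeSwap_eq_iff_of_ne ha hb).2 rfl

theorem kempeSwap_mk_of_not_reachable (h : ¬ (kempeGraph H ψ a b).Reachable w v) :
    kempeSwap H ψ a b w s(v, u) = ψ s(v, u) :=
  if_neg fun hc => h (hc.2 v (Sym2.mem_mk_left v u))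

theorem kempeSwap_mk_of_reachable (h : (kempeGraph H ψ a b).Reachable w v) (hu : H.Adj v u) :
    kempeSwap H ψ a b w s(v, u) = Equiv.swap a b (ψ s(v, u)) := by
  by_cases hab : ψ s(v, u) = a ∨ ψ s(v, u) = b
  · have hK : (kempeGraph H ψ a b).Adj v u := ⟨hu, hab⟩
    refine if_pos ⟨hK, fun t ht => ?_⟩
    rcases Sym2.mem_iff.1 ht with rfl | rfl
    exacts [h, h.trans hK.reachable]
  · push Not at hab
    rw [kempeSwap_of_ne hab.1 hab.2, Equiv.swap_apply_of_ne_of_ne hab.1 hab.2]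

theorem IsProperEdgeColoring.kempeSwap (hψ : IsProperEdgeColoring H k ψ) (ha : a ∈ Icc 1 k)
    (hb : b ∈ Icc 1 k) (w : V) : IsProperEdgeColoring H k (kempeSwap H ψ a b w) := by
  refine isProperEdgeColoring_iff.2 ⟨fun u v h => ?_, fun v u₁ u₂ h₁ h₂ hne => ?_⟩
  · unfold _root_.kempeSwap
    split_ifs
    exacts [(Equiv.swap_apply_mem_iff ha hb).2 (hψ.mem_Icc h), hψ.mem_Icc h]
  · by_cases hv : (kempeGraph H ψ a b).Reachable w v
    · rw [kempeSwap_mk_of_reachable hv h₁, kempeSwap_mk_of_reachable hv h₂]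
      exact (Equiv.injective _).ne (hψ.ne h₁ h₂ hne)
    · rw [kempeSwap_mk_of_not_reachable hv, kempeSwap_mk_of_not_reachable hv]
      exact hψ.ne h₁ h₂ hne

theorem mem_missing_kempeSwap_of_not_reachable (h : ¬ (kempeGraph H ψ a b).Reachable w v) :
    c ∈ missing H k (kempeSwap H ψ a b w) v ↔ c ∈ missing H k ψ v := by
  simp only [mem_missing, kempeSwap_mk_of_not_reachable h]

theorem mem_missing_kempeSwap_of_reachable (ha : a ∈ Icc 1 k) (hb : b ∈ Icc 1 k)
    (h : (kempeGraph H ψ a b).Reachable w v) :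
    c ∈ missing H k (kempeSwap H ψ a b w) v ↔ Equiv.swap a b c ∈ missing H k ψ v := by
  simp only [mem_missing, Equiv.swap_apply_mem_iff ha hb]
  refine and_congr_right fun _ => forall_congr' fun u => forall_congr' fun hu => ?_
  rw [kempeSwap_mk_of_reachable h hu, Ne, Equiv.swap_apply_eq_iff]

theorem mem_missing_kempeSwap_self (ha : a ∈ missing H k ψ w)
    (hb : b ∈ Icc 1 k) : b ∈ missing H k (kempeSwap H ψ a b w) w := by
  rwa [mem_missing_kempeSwap_of_reachable (mem_Icc_of_mem_missing ha) hb (.refl w),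
    Equiv.swap_apply_right]

theorem mem_missing_kempeSwap_self' (ha : a ∈ Icc 1 k)
    (hb : b ∈ missing H k ψ w) : a ∈ missing H k (kempeSwap H ψ a b w) w := by
  rwa [mem_missing_kempeSwap_of_reachable ha (mem_Icc_of_mem_missing hb) (.refl w),
    Equiv.swap_apply_left]

theorem mem_missing_kempeSwap_of_ne (ha : c ≠ a) (hb : c ≠ b) :
    c ∈ missing H k (kempeSwap H ψ a b w) v ↔ c ∈ missing H k ψ v := by
  simp only [mem_missing, Ne, kempeSwap_eq_iff_of_ne ha hb]

theorem kempeSwap_mem_missing_of_ne {e : Sym2 V} (ha : ψ e ≠ a) (hb : ψ e ≠ b)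
    (h : ψ e ∈ missing H k ψ v) :
    kempeSwap H ψ a b w e ∈ missing H k (kempeSwap H ψ a b w) v := by
  rwa [kempeSwap_of_ne ha hb, mem_missing_kempeSwap_of_ne ha hb]

namespace IsProperEdgeColoring

theorem kempeGraph_adj_three {u₁ u₂ u₃ : V} (hψ : IsProperEdgeColoring H k ψ)
    (h₁ : (kempeGraph H ψ a b).Adj v u₁) (h₂ : (kempeGraph H ψ a b).Adj v u₂)
    (h₃ : (kempeGraph H ψ a b).Adj v u₃) : u₁ = u₂ ∨ u₁ = u₃ ∨ u₂ = u₃ := by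
  by_contra! hne
  have := hψ.ne h₁.1 h₂.1 hne.1
  have := hψ.ne h₁.1 h₃.1 hne.2.1
  have := hψ.ne h₂.1 h₃.1 hne.2.2
  have := h₁.2; have := h₂.2; have := h₃.2
  omega

theorem kempeGraph_neighborSet_subsingleton (hψ : IsProperEdgeColoring H k ψ)
    (hv : a ∈ missing H k ψ v ∨ b ∈ missing H k ψ v) :
    ((kempeGraph H ψ a b).neighborSet v).Subsingleton := by
  intro u₁ h₁ u₂ h₂
  by_contra hne
  have := hψ.ne h₁.1 h₂.1 hne
  have := h₁.2; have := h₂.2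
  rcases hv with hv | hv <;>
    have := ne_of_mem_missing_left hv h₁.1 <;> have := ne_of_mem_missing_left hv h₂.1 <;>
    omega

theorem not_reachable_kempeGraph (hψ : IsProperEdgeColoring H k ψ)
    (hx : a ∈ missing H k ψ x ∨ b ∈ missing H k ψ x)
    (hy : a ∈ missing H k ψ y ∨ b ∈ missing H k ψ y)
    (hz : a ∈ missing H k ψ z ∨ b ∈ missing H k ψ z) (hxy : x ≠ y) (hxz : x ≠ z) (hyz : y ≠ z)
    (h : (kempeGraph H ψ a b).Reachable x y) : ¬ (kempeGraph H ψ a b).Reachable x z :=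
  SimpleGraph.not_reachable_of_subsingleton_neighborSet (fun _ _ _ _ => hψ.kempeGraph_adj_three)
    (hψ.kempeGraph_neighborSet_subsingleton hx) (hψ.kempeGraph_neighborSet_subsingleton hy)
    (hψ.kempeGraph_neighborSet_subsingleton hz) hxy hxz hyz h

end IsProperEdgeColoring

end Kempe

/-- The part of a Kierstead path `y₀ y₁ y₂ y₃` in `H = G - y₀y₁` that does not depend on the
colouring; `disjoint₀₁` is what the criticality of the edge `y₀y₁` provides. -/
structure KiersteadFrame (H : SimpleGraph V) (k : ℕ) (y₀ y₁ y₂ y₃ : V)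
    [Fintype (H.neighborSet y₁)] : Prop where
  disjoint₀₁ : ∀ ψ, IsProperEdgeColoring H k ψ → Disjoint (missing H k ψ y₀) (missing H k ψ y₁)
  adj₁₂ : H.Adj y₁ y₂
  adj₂₃ : H.Adj y₂ y₃
  ne₀₁ : y₀ ≠ y₁
  ne₀₂ : y₀ ≠ y₂
  ne₀₃ : y₀ ≠ y₃
  ne₁₃ : y₁ ≠ y₃
  degree₁ : H.degree y₁ < k

namespace KiersteadFrame

variable {H : SimpleGraph V} {k : ℕ} {y₀ y₁ y₂ y₃ : V} [Fintype (H.neighborSet y₁)]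
  {ψ : Sym2 V → ℕ}

theorem disjoint₁₂ (F : KiersteadFrame H k y₀ y₁ y₂ y₃) (hψ : IsProperEdgeColoring H k ψ)
    (he₂ : ψ s(y₁, y₂) ∈ missing H k ψ y₀) :
    Disjoint (missing H k ψ y₁) (missing H k ψ y₂) := by
  refine disjoint_left.2 fun α h₁ h₂ => ?_
  have hy₀ : y₀ ∉ s(y₁, y₂) := by simp [F.ne₀₁, F.ne₀₂]
  exact disjoint_left.1 (F.disjoint₀₁ _ (hψ.update h₁ h₂))
    ((mem_missing_update_of_notMem hy₀).2 he₂) (hψ.mem_missing_update_self F.adj₁₂ h₁)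

theorem disjoint₀₂ (F : KiersteadFrame H k y₀ y₁ y₂ y₃) (hψ : IsProperEdgeColoring H k ψ)
    (he₂ : ψ s(y₁, y₂) ∈ missing H k ψ y₀) :
    Disjoint (missing H k ψ y₀) (missing H k ψ y₂) := by
  refine disjoint_left.2 fun α h₀ h₂ => ?_
  obtain ⟨τ, hτ⟩ := missing_nonempty_of_degree_lt (ψ := ψ) F.degree₁
  have hα := mem_Icc_of_mem_missing h₀
  have hτI := mem_Icc_of_mem_missing hτ
  have hβα : ψ s(y₁, y₂) ≠ α := ne_of_mem_missing_right h₂ F.adj₁₂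
  have hβτ : ψ s(y₁, y₂) ≠ τ := ne_of_mem_missing_left hτ F.adj₁₂
  by_cases hr : (kempeGraph H ψ α τ).Reachable y₁ y₀
  · have hr₂ : ¬ (kempeGraph H ψ α τ).Reachable y₂ y₁ := fun h =>
      hψ.not_reachable_kempeGraph (.inr hτ) (.inl h₀) (.inl h₂) F.ne₀₁.symm F.adj₁₂.ne
        F.ne₀₂ hr h.symm
    exact disjoint_left.1 (F.disjoint₁₂ (hψ.kempeSwap hα hτI y₂)
        (kempeSwap_mem_missing_of_ne hβα hβτ he₂))
      ((mem_missing_kempeSwap_of_not_reachable hr₂).2 hτ) (mem_missing_kempeSwap_self h₂ hτI)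
  · exact disjoint_left.1 (F.disjoint₀₁ _ (hψ.kempeSwap hα hτI y₀))
      (mem_missing_kempeSwap_self h₀ hτI)
      ((mem_missing_kempeSwap_of_not_reachable fun h => hr h.symm).2 hτ)

theorem disjoint₂₃ (F : KiersteadFrame H k y₀ y₁ y₂ y₃) (hψ : IsProperEdgeColoring H k ψ)
    (he₂ : ψ s(y₁, y₂) ∈ missing H k ψ y₀)
    (he₃ : ψ s(y₂, y₃) ∈ missing H k ψ y₀ ∪ missing H k ψ y₁) :
    Disjoint (missing H k ψ y₂) (missing H k ψ y₃) := by
  refine disjoint_left.2 fun α h₂ h₃ => ?_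
  have hψ' := hψ.update h₂ h₃
  have hγ₂ := hψ.mem_missing_update_self F.adj₂₃ h₂
  have hy₀ : y₀ ∉ s(y₂, y₃) := by simp [F.ne₀₂, F.ne₀₃]
  have hy₁ : y₁ ∉ s(y₂, y₃) := by simp [F.adj₁₂.ne, F.ne₁₃]
  have he₂' : update ψ s(y₂, y₃) α s(y₁, y₂) ∈ missing H k (update ψ s(y₂, y₃) α) y₀ := by
    rw [update_of_ne fun (h : s(y₁, y₂) = s(y₂, y₃)) => hy₁ (h ▸ Sym2.mem_mk_left _ _)]
    exact (mem_missing_update_of_notMem hy₀).2 he₂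
  rcases mem_union.1 he₃ with hγ | hγ
  · exact disjoint_left.1 (F.disjoint₀₂ hψ' he₂') ((mem_missing_update_of_notMem hy₀).2 hγ) hγ₂
  · exact disjoint_left.1 (F.disjoint₁₂ hψ' he₂') ((mem_missing_update_of_notMem hy₁).2 hγ) hγ₂

theorem disjoint₁₃ (F : KiersteadFrame H k y₀ y₁ y₂ y₃) [Fintype (H.neighborSet y₂)]
    (hy₂ : H.degree y₂ < k)
    (hψ : IsProperEdgeColoring H k ψ) (he₂ : ψ s(y₁, y₂) ∈ missing H k ψ y₀)
    (he₃ : ψ s(y₂, y₃) ∈ missing H k ψ y₀ ∪ missing H k ψ y₁) :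
    Disjoint (missing H k ψ y₁) (missing H k ψ y₃) := by
  refine disjoint_left.2 fun α h₁ h₃ => ?_
  obtain ⟨σ, hσ⟩ := missing_nonempty_of_degree_lt (ψ := ψ) hy₂
  have hα := mem_Icc_of_mem_missing h₁
  have hσI := mem_Icc_of_mem_missing hσ
  have hβα : ψ s(y₁, y₂) ≠ α := ne_of_mem_missing_left h₁ F.adj₁₂
  have hβσ : ψ s(y₁, y₂) ≠ σ := ne_of_mem_missing_right hσ F.adj₁₂
  have hγα : ψ s(y₂, y₃) ≠ α := ne_of_mem_missing_right h₃ F.adj₂₃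
  have hγσ : ψ s(y₂, y₃) ≠ σ := ne_of_mem_missing_left hσ F.adj₂₃
  by_cases hr : (kempeGraph H ψ α σ).Reachable y₂ y₃
  · have hr₁ : ¬ (kempeGraph H ψ α σ).Reachable y₁ y₂ := fun h =>
      hψ.not_reachable_kempeGraph (.inr hσ) (.inl h₃) (.inl h₁) F.adj₂₃.ne F.adj₁₂.ne.symm
        F.ne₁₃.symm hr h.symm
    exact disjoint_left.1 (F.disjoint₁₂ (hψ.kempeSwap hα hσI y₁)
        (kempeSwap_mem_missing_of_ne hβα hβσ he₂))
      (mem_missing_kempeSwap_self h₁ hσI) ((mem_missing_kempeSwap_of_not_reachable hr₁).2 hσ)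
  · exact disjoint_left.1 (F.disjoint₂₃ (hψ.kempeSwap hα hσI y₃)
        (kempeSwap_mem_missing_of_ne hβα hβσ he₂)
        (mem_union.2 ((mem_union.1 he₃).imp (kempeSwap_mem_missing_of_ne hγα hγσ)
          (kempeSwap_mem_missing_of_ne hγα hγσ))))
      ((mem_missing_kempeSwap_of_not_reachable fun h => hr h.symm).2 hσ)
      (mem_missing_kempeSwap_self h₃ hσI)

theorem color₁₂_notMem_missing₃_of_color₂₃_mem_missing₁ (F : KiersteadFrame H k y₀ y₁ y₂ y₃)
    (hψ : IsProperEdgeColoring H k ψ) (he₂ : ψ s(y₁, y₂) ∈ missing H k ψ y₀)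
    (hγ₁ : ψ s(y₂, y₃) ∈ missing H k ψ y₁) : ψ s(y₁, y₂) ∉ missing H k ψ y₃ := by
  intro hβ₃
  set K := kempeGraph H ψ (ψ s(y₂, y₃)) (ψ s(y₁, y₂))
  -- the chain of `y₁` is the path `y₁ y₂ y₃`, and swapping it frees `ψ s(y₁, y₂)` at `y₁`
  have hr : K.Reachable y₁ y₃ :=
    (show K.Adj y₁ y₂ from ⟨F.adj₁₂, .inr rfl⟩).reachable.trans
      (show K.Adj y₂ y₃ from ⟨F.adj₂₃, .inl rfl⟩).reachable
  have hr₀ := hψ.not_reachable_kempeGraph (.inl hγ₁) (.inr hβ₃) (.inr he₂) F.ne₁₃ F.ne₀₁.symm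
    F.ne₀₃.symm hr
  exact disjoint_left.1 (F.disjoint₀₁ _ (hψ.kempeSwap (hψ.mem_Icc F.adj₂₃) (hψ.mem_Icc F.adj₁₂) y₁))
    ((mem_missing_kempeSwap_of_not_reachable hr₀).2 he₂)
    (mem_missing_kempeSwap_self hγ₁ (hψ.mem_Icc F.adj₁₂))

theorem color₁₂_notMem_missing₃ (F : KiersteadFrame H k y₀ y₁ y₂ y₃) [Fintype (H.neighborSet y₂)]
    (hy₂ : H.degree y₂ < k) (hψ : IsProperEdgeColoring H k ψ)
    (he₂ : ψ s(y₁, y₂) ∈ missing H k ψ y₀)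
    (he₃ : ψ s(y₂, y₃) ∈ missing H k ψ y₀ ∪ missing H k ψ y₁) :
    ψ s(y₁, y₂) ∉ missing H k ψ y₃ := by
  intro hβ₃
  rcases mem_union.1 he₃ with hγ₀ | hγ₁
  swap
  · exact F.color₁₂_notMem_missing₃_of_color₂₃_mem_missing₁ hψ he₂ hγ₁ hβ₃
  obtain ⟨τ, hτ⟩ := missing_nonempty_of_degree_lt (ψ := ψ) F.degree₁
  have hβ := hψ.mem_Icc F.adj₁₂
  have hτI := mem_Icc_of_mem_missing hτ
  have hγβ : ψ s(y₂, y₃) ≠ ψ s(y₁, y₂) := by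
    rw [Sym2.eq_swap (a := y₁)]; exact hψ.ne F.adj₂₃ F.adj₁₂.symm F.ne₁₃.symm
  have hγτ : ψ s(y₂, y₃) ≠ τ := fun h => disjoint_left.1 (F.disjoint₀₁ ψ hψ) hγ₀ (h ▸ hτ)
  by_cases hr : (kempeGraph H ψ τ (ψ s(y₁, y₂))).Reachable y₁ y₀
  · have h₁₃ := hψ.not_reachable_kempeGraph (.inl hτ) (.inr he₂) (.inr hβ₃) F.ne₀₁.symm
      F.ne₁₃ F.ne₀₃ hr
    have h₃₁ : ¬ (kempeGraph H ψ τ (ψ s(y₁, y₂))).Reachable y₃ y₁ := fun h => h₁₃ h.symm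
    have h₃₀ : ¬ (kempeGraph H ψ τ (ψ s(y₁, y₂))).Reachable y₃ y₀ := fun h =>
      h₁₃ (hr.trans h.symm)
    have he₂' : kempeSwap H ψ τ (ψ s(y₁, y₂)) y₃ s(y₁, y₂) ∈
        missing H k (kempeSwap H ψ τ (ψ s(y₁, y₂)) y₃) y₀ := by
      rw [kempeSwap_mk_of_not_reachable h₃₁]
      exact (mem_missing_kempeSwap_of_not_reachable h₃₀).2 he₂
    exact disjoint_left.1 (F.disjoint₁₃ hy₂ (hψ.kempeSwap hτI hβ y₃) he₂'
        (mem_union_left _ (kempeSwap_mem_missing_of_ne hγτ hγβ hγ₀)))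
      ((mem_missing_kempeSwap_of_not_reachable h₃₁).2 hτ) (mem_missing_kempeSwap_self' hτI hβ₃)
  · exact disjoint_left.1 (F.disjoint₀₁ _ (hψ.kempeSwap hτI hβ y₁))
      ((mem_missing_kempeSwap_of_not_reachable hr).2 he₂) (mem_missing_kempeSwap_self hτ hβ)

theorem disjoint₀₃ (F : KiersteadFrame H k y₀ y₁ y₂ y₃) [Fintype (H.neighborSet y₂)]
    (hy₂ : H.degree y₂ < k)
    (hψ : IsProperEdgeColoring H k ψ) (he₂ : ψ s(y₁, y₂) ∈ missing H k ψ y₀)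
    (he₃ : ψ s(y₂, y₃) ∈ missing H k ψ y₀ ∪ missing H k ψ y₁) :
    Disjoint (missing H k ψ y₀) (missing H k ψ y₃) := by
  refine disjoint_left.2 fun α h₀ h₃ => ?_
  obtain ⟨σ, hσ⟩ := missing_nonempty_of_degree_lt (ψ := ψ) hy₂
  have hα := mem_Icc_of_mem_missing h₀
  have hσI := mem_Icc_of_mem_missing hσ
  have hβα : ψ s(y₁, y₂) ≠ α := fun h => F.color₁₂_notMem_missing₃ hy₂ hψ he₂ he₃ (h ▸ h₃)
  have hβσ : ψ s(y₁, y₂) ≠ σ := ne_of_mem_missing_right hσ F.adj₁₂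
  have hγα : ψ s(y₂, y₃) ≠ α := ne_of_mem_missing_right h₃ F.adj₂₃
  have hγσ : ψ s(y₂, y₃) ≠ σ := ne_of_mem_missing_left hσ F.adj₂₃
  have he₂' := kempeSwap_mem_missing_of_ne (w := y₀) hβα hβσ he₂
  by_cases hr : (kempeGraph H ψ α σ).Reachable y₂ y₃
  · have hr₀ : ¬ (kempeGraph H ψ α σ).Reachable y₀ y₂ := fun h =>
      hψ.not_reachable_kempeGraph (.inr hσ) (.inl h₃) (.inl h₀) F.adj₂₃.ne F.ne₀₂.symm
        F.ne₀₃.symm hr h.symm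
    exact disjoint_left.1 (F.disjoint₀₂ (hψ.kempeSwap hα hσI y₀) he₂')
      (mem_missing_kempeSwap_self h₀ hσI) ((mem_missing_kempeSwap_of_not_reachable hr₀).2 hσ)
  · exact disjoint_left.1 (F.disjoint₂₃ (hψ.kempeSwap hα hσI y₃)
        (kempeSwap_mem_missing_of_ne hβα hβσ he₂)
        (mem_union.2 ((mem_union.1 he₃).imp (kempeSwap_mem_missing_of_ne hγα hγσ)
          (kempeSwap_mem_missing_of_ne hγα hγσ))))
      ((mem_missing_kempeSwap_of_not_reachable fun h => hr h.symm).2 hσ)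
      (mem_missing_kempeSwap_self h₃ hσI)

theorem of_deleteEdges [Fintype V] {G : SimpleGraph V} {Δ : ℕ} {y₀ y₁ y₂ y₃ : V}
    (hΔ : G.maxDegree ≤ Δ) (hG : ¬ ∃ ψ, IsProperEdgeColoring G Δ ψ) (h₀₁ : G.Adj y₀ y₁)
    (h₁₂ : G.Adj y₁ y₂) (h₂₃ : G.Adj y₂ y₃) (hnodup : [y₀, y₁, y₂, y₃].Nodup) :
    KiersteadFrame (G.deleteEdges {s(y₀, y₁)}) Δ y₀ y₁ y₂ y₃ := by
  simp only [List.nodup_cons, List.mem_cons, List.not_mem_nil, or_false, not_or,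
    List.nodup_nil, and_true] at hnodup
  obtain ⟨⟨n₀₁, n₀₂, n₀₃⟩, ⟨n₁₂, n₁₃⟩, -⟩ := hnodup
  exact
    { disjoint₀₁ := fun _ => disjoint_missing_of_not_colorable hG
      adj₁₂ := by simp [h₁₂, Ne.symm n₀₁, Ne.symm n₀₂]
      adj₂₃ := by simp [h₂₃, Ne.symm n₀₂, Ne.symm n₁₂]
      ne₀₁ := n₀₁, ne₀₂ := n₀₂, ne₀₃ := n₀₃, ne₁₃ := n₁₃
      degree₁ := (G.degree_deleteEdges_lt h₀₁).trans_le
        ((G.degree_le_maxDegree y₁).trans hΔ) }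

end KiersteadFrame

theorem stmt5_general (G : SimpleGraph V) [Fintype V] (Δ : ℕ) (hΔ : G.maxDegree = Δ)
    (hG1 : ¬ ∃ ψ, IsProperEdgeColoring G Δ ψ)
    (y0 y1 y2 y3 : V)
    (h01 : G.Adj y0 y1) (h12 : G.Adj y1 y2) (h23 : G.Adj y2 y3)
    (hnodup : [y0, y1, y2, y3].Nodup)
    (φ : Sym2 V → ℕ)
    (hφ : IsProperEdgeColoring (G.deleteEdges {s(y0, y1)}) Δ φ)
    (he2 : φ s(y1, y2) ∈ m5 G Δ φ y0 y1 y0 ∪ m5 G Δ φ y0 y1 y1)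
    (he3 : φ s(y2, y3) ∈ m5 G Δ φ y0 y1 y0 ∪ m5 G Δ φ y0 y1 y1 ∪ m5 G Δ φ y0 y1 y2) :
    m5 G Δ φ y0 y1 y0 ∩ m5 G Δ φ y0 y1 y1 = ∅ ∧
    (G.degree y2 < Δ →
      ∀ u ∈ ({y0, y1, y2, y3} : Finset V), ∀ v ∈ ({y0, y1, y2, y3} : Finset V),
        u ≠ v → m5 G Δ φ y0 y1 u ∩ m5 G Δ φ y0 y1 v = ∅) := by
  have F := KiersteadFrame.of_deleteEdges hΔ.le hG1 h01 h12 h23 hnodup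
  have he₂ : φ s(y1, y2) ∈ m5 G Δ φ y0 y1 y0 :=
    (mem_union.1 he2).resolve_right (notMem_missing_of_adj F.adj₁₂)
  have he₃ : φ s(y2, y3) ∈ m5 G Δ φ y0 y1 y0 ∪ m5 G Δ φ y0 y1 y1 :=
    (mem_union.1 he3).resolve_right (notMem_missing_of_adj F.adj₂₃)
  refine ⟨disjoint_iff_inter_eq_empty.1 (F.disjoint₀₁ φ hφ), fun hy₂ => ?_⟩
  have hy₂' : (G.deleteEdges {s(y0, y1)}).degree y2 < Δ :=
    (SimpleGraph.degree_le_of_le (G.deleteEdges_le _)).trans_lt hy₂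
  exact inter_eq_empty_of_disjoint₄ (F.disjoint₀₁ φ hφ) (F.disjoint₀₂ hφ he₂)
    (F.disjoint₀₃ hy₂' hφ he₂ he₃) (F.disjoint₁₂ hφ he₂) (F.disjoint₁₃ hy₂' hφ he₂ he₃)
    (F.disjoint₂₃ hφ he₂ he₃)

theorem stmt5 (G : SimpleGraph V) [Fintype V] (Δ : ℕ) (hΔ : G.maxDegree = Δ)
    (hG1 : ¬ ∃ ψ, IsProperEdgeColoring G Δ ψ)
    (hG2 : ∃ ψ, IsProperEdgeColoring G (Δ + 1) ψ)
    (y0 y1 y2 y3 : V)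
    (h01 : G.Adj y0 y1) (h12 : G.Adj y1 y2) (h23 : G.Adj y2 y3)
    (hnodup : [y0, y1, y2, y3].Nodup)
    (φ : Sym2 V → ℕ)
    (hφ : IsProperEdgeColoring (G.deleteEdges {s(y0, y1)}) Δ φ)
    (he2 : φ s(y1, y2) ∈ m5 G Δ φ y0 y1 y0 ∪ m5 G Δ φ y0 y1 y1)
    (he3 : φ s(y2, y3) ∈ m5 G Δ φ y0 y1 y0 ∪ m5 G Δ φ y0 y1 y1 ∪ m5 G Δ φ y0 y1 y2) :
    m5 G Δ φ y0 y1 y0 ∩ m5 G Δ φ y0 y1 y1 = ∅ ∧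
    (G.degree y2 < Δ →
      ∀ u ∈ ({y0, y1, y2, y3} : Finset V), ∀ v ∈ ({y0, y1, y2, y3} : Finset V),
        u ≠ v → m5 G Δ φ y0 y1 u ∩ m5 G Δ φ y0 y1 v = ∅) :=
  stmt5_general G Δ hΔ hG1 y0 y1 y2 y3 h01 h12 h23 hnodup φ hφ he2 he3
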